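/- Let T* ∈ (0,1), γ* ∈ (0,1), γ₃, γ₄ ∈ (0,1), and let k ∈ C^{γ₃}([0,T*]) and f ∈ C^{γ₄}([0,T*]). Set γ̄ = min{γ₃, γ₄}. Then for any λ ∈ (0,1) and every t ∈ [0,T*], |G_f(λt) − G_f(t)| ≤ (2 t^{γ̄} / (γ* Γ(1+x*))) · (⟨f⟩^{(γ₄)}_{[0,T*]} ‖k‖_{C([0,T*])} + |f(0)| ⟨k⟩^{(γ₃)}_{[0,T*]}). -/

import Mathlib

open Set MeasureTheory

/-- Hölder seminorm `⟨f⟩^{(α)}_{[0,T]}` of `f` on `[0,T]`. -/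
noncomputable def holderSemi (f : ℝ → ℝ) (T α : ℝ) : ℝ :=
  sSup {y : ℝ | ∃ s t : ℝ, 0 ≤ s ∧ s < t ∧ t ≤ T ∧ y = |f t - f s| / (t - s) ^ α}

/-- Sup norm `‖f‖_{C([0,T])}`. -/
noncomputable def supNorm (f : ℝ → ℝ) (T : ℝ) : ℝ :=
  sSup ((fun t => |f t|) '' Set.Icc 0 T)

/-- The minimum value of the Euler Gamma function on `(0, ∞)`, i.e. `Γ(1 + x*)`. -/
noncomputable def GammaMin : ℝ := sInf (Real.Gamma '' Set.Ioi (0 : ℝ))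

/-- `G_f(t) = ∫₀¹ (1-z)^{γ*-1} k(t - zt) f(zt) dz`. -/
noncomputable def Gbig (γs : ℝ) (k f : ℝ → ℝ) (t : ℝ) : ℝ :=
  ∫ z in (0:ℝ)..1, (1 - z) ^ (γs - 1) * k (t - z * t) * f (z * t)

/-! Write `p₁ = λt(1 - z)`, `p₂ = t(1 - z)`, `q₁ = λtz`, `q₂ = tz`, all in `[0, t]`, with
`0 ≤ p₂ - p₁ ≤ t`. Subtracting `f 0`,
`k(p₁) f(q₁) - k(p₂) f(q₂) = k(p₁)(f(q₁) - f 0) - k(p₂)(f(q₂) - f 0) + (k(p₁) - k(p₂)) f 0`,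
so the integrands of `G_f(λt)` and `G_f(t)` differ by at most
`2 ‖k‖ ⟨f⟩ t^γ₄ + ⟨k⟩ |f 0| t^γ₃ ≤ 2 t^γ̄ (⟨f⟩ ‖k‖ + |f 0| ⟨k⟩)`, using `t ≤ 1`.
The weight `(1 - z)^(γ* - 1)` integrates to `1 / γ*`, and `Γ(1 + x*) ≤ Γ(1) = 1`. -/

lemma exists_gammaMin_eq :
    ∃ x ∈ Ioi (0 : ℝ), IsMinOn Real.Gamma (Ioi 0) x ∧ GammaMin = Real.Gamma x := by
  obtain ⟨x, hx, hmin⟩ := Real.exists_isMinOn_Gamma_Ioi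
  have hx0 : x ∈ Ioi (0 : ℝ) := zero_lt_one.trans hx.1
  refine ⟨x, hx0, hmin, IsLeast.csInf_eq ⟨mem_image_of_mem _ hx0, ?_⟩⟩
  rintro _ ⟨y, hy, rfl⟩
  exact hmin hy

lemma gammaMin_pos : 0 < GammaMin := by
  obtain ⟨x, hx, -, hΓ⟩ := exists_gammaMin_eq
  exact hΓ ▸ Real.Gamma_pos_of_pos hx

lemma gammaMin_le_one : GammaMin ≤ 1 := by
  obtain ⟨x, -, hmin, hΓ⟩ := exists_gammaMin_eq
  simpa [hΓ] using hmin (mem_Ioi.2 zero_lt_one)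

def HolderBoundOn (g : ℝ → ℝ) (T C α : ℝ) : Prop :=
  ∀ s t : ℝ, 0 ≤ s → s ≤ t → t ≤ T → |g t - g s| ≤ C * (t - s) ^ α

section HolderBoundOn

variable {g : ℝ → ℝ} {T C α : ℝ}

lemma HolderBoundOn.nonneg (hg : HolderBoundOn g T C α) (hT : 0 < T) : 0 ≤ C :=
  (mul_nonneg_iff_of_pos_right (Real.rpow_pos_of_pos (by simpa using hT) α)).1 <|
    (abs_nonneg _).trans (hg 0 T le_rfl hT.le le_rfl)

lemma HolderBoundOn.abs_sub_le (hg : HolderBoundOn g T C α) (hC : 0 ≤ C) (hα : 0 ≤ α)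
    {s u d : ℝ} (hs : 0 ≤ s) (hsu : s ≤ u) (huT : u ≤ T) (hd : u - s ≤ d) :
    |g u - g s| ≤ C * d ^ α :=
  (hg s u hs hsu huT).trans <| by gcongr

end HolderBoundOn

lemma abs_le_supNorm {g : ℝ → ℝ} {T x : ℝ} (hg : ContinuousOn g (Icc 0 T)) (hx : x ∈ Icc 0 T) :
    |g x| ≤ supNorm g T :=
  le_csSup (isCompact_Icc.image_of_continuousOn hg.abs).bddAbove ⟨x, hx, rfl⟩

lemma abs_mul_sub_mul_le {a₁ a₂ b₁ b₂ c K H L : ℝ} (ha₁ : |a₁| ≤ K) (ha₂ : |a₂| ≤ K)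
    (hb₁ : |b₁ - c| ≤ H) (hb₂ : |b₂ - c| ≤ H) (ha : |a₁ - a₂| ≤ L) :
    |a₁ * b₁ - a₂ * b₂| ≤ 2 * K * H + L * |c| := by
  have hK : 0 ≤ K := (abs_nonneg _).trans ha₁
  calc |a₁ * b₁ - a₂ * b₂|
      = |a₁ * (b₁ - c) - a₂ * (b₂ - c) + (a₁ - a₂) * c| := by ring_nf
    _ ≤ |a₁| * |b₁ - c| + |a₂| * |b₂ - c| + |a₁ - a₂| * |c| := by
        rw [← abs_mul, ← abs_mul, ← abs_mul]
        exact (abs_add_le _ _).trans (add_le_add_left (abs_sub _ _) _)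
    _ ≤ K * H + K * H + L * |c| := by gcongr
    _ = 2 * K * H + L * |c| := by ring

lemma mul_mem_Icc_of_mem_unitInterval {z τ T : ℝ} (hz : z ∈ Icc (0 : ℝ) 1) (hτ : τ ∈ Icc 0 T) :
    z * τ ∈ Icc 0 T ∧ τ - z * τ ∈ Icc 0 T := by
  obtain ⟨hz0, hz1⟩ := hz
  obtain ⟨hτ0, hτT⟩ := hτ
  refine ⟨⟨by positivity, ?_⟩, ⟨?_, ?_⟩⟩ <;> nlinarith

section Weight

variable {γ : ℝ}

lemma intervalIntegrable_one_sub_rpow (hγ : 0 < γ) :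
    IntervalIntegrable (fun z : ℝ => (1 - z) ^ (γ - 1)) volume 0 1 := by
  simpa using ((intervalIntegral.intervalIntegrable_rpow' (a := 0) (b := 1)
    (r := γ - 1) (by linarith)).comp_sub_left 1).symm

lemma integral_one_sub_rpow (hγ : 0 < γ) : ∫ z in (0 : ℝ)..1, (1 - z) ^ (γ - 1) = 1 / γ := by
  rw [intervalIntegral.integral_comp_sub_left (fun x : ℝ => x ^ (γ - 1)), sub_self, sub_zero,
    integral_rpow (Or.inl (by linarith)), sub_add_cancel, Real.one_rpow,
    Real.zero_rpow hγ.ne', sub_zero]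

lemma abs_integral_one_sub_rpow_mul_le (hγ : 0 < γ) {g : ℝ → ℝ} {M : ℝ}
    (hg : ∀ z ∈ Icc (0 : ℝ) 1, |g z| ≤ M) :
    |∫ z in (0 : ℝ)..1, (1 - z) ^ (γ - 1) * g z| ≤ M / γ := by
  have hbound : ∀ z ∈ Ioc (0 : ℝ) 1, ‖(1 - z) ^ (γ - 1) * g z‖ ≤ (1 - z) ^ (γ - 1) * M := by
    intro z hz
    have hw : 0 ≤ (1 - z) ^ (γ - 1) := Real.rpow_nonneg (by linarith [hz.2]) _
    rw [Real.norm_eq_abs, abs_mul, abs_of_nonneg hw]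
    exact mul_le_mul_of_nonneg_left (hg z (Ioc_subset_Icc_self hz)) hw
  have h := intervalIntegral.norm_integral_le_of_norm_le zero_le_one
    (Filter.Eventually.of_forall hbound) ((intervalIntegrable_one_sub_rpow hγ).mul_const M)
  rwa [Real.norm_eq_abs, intervalIntegral.integral_mul_const, integral_one_sub_rpow hγ,
    one_div_mul_eq_div] at h

end Weight

section Gbig

variable {γ T s t M : ℝ} {k f : ℝ → ℝ}

lemma Gbig_eq_integral_mul (γ : ℝ) (k f : ℝ → ℝ) (t : ℝ) :
    Gbig γ k f t = ∫ z in (0 : ℝ)..1, (1 - z) ^ (γ - 1) * (k (t - z * t) * f (z * t)) := by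
  simp only [Gbig, mul_assoc]

lemma intervalIntegrable_Gbig_integrand (hγ : 0 < γ) (hk : ContinuousOn k (Icc 0 T))
    (hf : ContinuousOn f (Icc 0 T)) (ht : t ∈ Icc 0 T) :
    IntervalIntegrable (fun z => (1 - z) ^ (γ - 1) * (k (t - z * t) * f (z * t))) volume 0 1 := by
  refine (intervalIntegrable_one_sub_rpow hγ).mul_continuousOn (ContinuousOn.mul ?_ ?_)
  · exact hk.comp (by fun_prop) fun z hz =>
      (mul_mem_Icc_of_mem_unitInterval (by simpa using hz) ht).2
  · exact hf.comp (by fun_prop) fun z hz =>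
      (mul_mem_Icc_of_mem_unitInterval (by simpa using hz) ht).1

lemma abs_Gbig_sub_le (hγ : 0 < γ) (hk : ContinuousOn k (Icc 0 T))
    (hf : ContinuousOn f (Icc 0 T)) (hs : s ∈ Icc 0 T) (ht : t ∈ Icc 0 T)
    (hM : ∀ z ∈ Icc (0 : ℝ) 1, |k (s - z * s) * f (z * s) - k (t - z * t) * f (z * t)| ≤ M) :
    |Gbig γ k f s - Gbig γ k f t| ≤ M / γ := by
  rw [Gbig_eq_integral_mul, Gbig_eq_integral_mul, ← intervalIntegral.integral_sub
    (intervalIntegrable_Gbig_integrand hγ hk hf hs) (intervalIntegrable_Gbig_integrand hγ hk hf ht)]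
  simpa only [← mul_sub] using abs_integral_one_sub_rpow_mul_le hγ hM

end Gbig

lemma abs_Gbig_integrand_sub_le {k f : ℝ → ℝ} {T Hk Hf γ₃ γ₄ lam t z : ℝ}
    (hkc : ContinuousOn k (Icc 0 T)) (hkh : HolderBoundOn k T Hk γ₃)
    (hfh : HolderBoundOn f T Hf γ₄) (hHk : 0 ≤ Hk) (hHf : 0 ≤ Hf) (hγ₃ : 0 ≤ γ₃) (hγ₄ : 0 ≤ γ₄)
    (hlam : lam ∈ Icc (0 : ℝ) 1) (ht : t ∈ Icc 0 T) (hz : z ∈ Icc (0 : ℝ) 1) :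
    |k (lam * t - z * (lam * t)) * f (z * (lam * t)) - k (t - z * t) * f (z * t)| ≤
      2 * supNorm k T * (Hf * t ^ γ₄) + Hk * t ^ γ₃ * |f 0| := by
  have htt : t ∈ Icc 0 t := right_mem_Icc.2 ht.1
  have hlt : lam * t ∈ Icc 0 t := (mul_mem_Icc_of_mem_unitInterval hlam htt).1
  obtain ⟨⟨hq₁, hq₁t⟩, hp₁, hp₁t⟩ := mul_mem_Icc_of_mem_unitInterval hz hlt
  obtain ⟨⟨hq₂, hq₂t⟩, hp₂, hp₂t⟩ := mul_mem_Icc_of_mem_unitInterval hz htt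
  have hp : lam * t - z * (lam * t) ≤ t - z * t := by nlinarith [hlam.2, hz.2, ht.1]
  refine abs_mul_sub_mul_le (abs_le_supNorm hkc ⟨hp₁, by linarith [ht.2]⟩)
    (abs_le_supNorm hkc ⟨hp₂, by linarith [ht.2]⟩)
    (hfh.abs_sub_le hHf hγ₄ le_rfl hq₁ (by linarith [ht.2]) (by linarith))
    (hfh.abs_sub_le hHf hγ₄ le_rfl hq₂ (by linarith [ht.2]) (by linarith)) ?_
  rw [abs_sub_comm]
  exact hkh.abs_sub_le hHk hγ₃ hp₁ hp (by linarith [ht.2]) (by linarith)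

theorem stmt_16 (Ts γs γ₃ γ₄ : ℝ) (k f : ℝ → ℝ)
    (hTs : Ts ∈ Set.Ioo (0:ℝ) 1) (hγs : γs ∈ Set.Ioo (0:ℝ) 1)
    (hγ₃ : γ₃ ∈ Set.Ioo (0:ℝ) 1) (hγ₄ : γ₄ ∈ Set.Ioo (0:ℝ) 1)
    (hkc : ContinuousOn k (Set.Icc 0 Ts))
    (hkh : ∀ s t : ℝ, 0 ≤ s → s ≤ t → t ≤ Ts →
      |k t - k s| ≤ holderSemi k Ts γ₃ * (t - s) ^ γ₃)
    (hfc : ContinuousOn f (Set.Icc 0 Ts))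
    (hfh : ∀ s t : ℝ, 0 ≤ s → s ≤ t → t ≤ Ts →
      |f t - f s| ≤ holderSemi f Ts γ₄ * (t - s) ^ γ₄) :
    ∀ lam ∈ Set.Ioo (0:ℝ) 1, ∀ t ∈ Set.Icc (0:ℝ) Ts,
      |Gbig γs k f (lam * t) - Gbig γs k f t| ≤
        2 * t ^ min γ₃ γ₄ / (γs * GammaMin) *
          (holderSemi f Ts γ₄ * supNorm k Ts + |f 0| * holderSemi k Ts γ₃) := by
  intro lam hlam t ht
  have hγs0 : 0 < γs := hγs.1
  have hHk : 0 ≤ holderSemi k Ts γ₃ := HolderBoundOn.nonneg hkh hTs.1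
  have hHf : 0 ≤ holderSemi f Ts γ₄ := HolderBoundOn.nonneg hfh hTs.1
  have hK : 0 ≤ supNorm k Ts := (abs_nonneg _).trans (abs_le_supNorm hkc ⟨le_rfl, hTs.1.le⟩)
  have hpow {γ : ℝ} (hγ : min γ₃ γ₄ ≤ γ) : t ^ γ ≤ t ^ min γ₃ γ₄ :=
    Real.rpow_le_rpow_of_exponent_ge' ht.1 (ht.2.trans hTs.2.le) (le_min hγ₃.1.le hγ₄.1.le) hγ
  have htm : 0 ≤ t ^ min γ₃ γ₄ := Real.rpow_nonneg ht.1 _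
  have hG := abs_Gbig_sub_le hγs0 hkc hfc
    (mul_mem_Icc_of_mem_unitInterval (Ioo_subset_Icc_self hlam) ht).1 ht fun z hz =>
      abs_Gbig_integrand_sub_le hkc hkh hfh hHk hHf hγ₃.1.le hγ₄.1.le (Ioo_subset_Icc_self hlam) ht hz
  calc |Gbig γs k f (lam * t) - Gbig γs k f t|
      ≤ (2 * supNorm k Ts * (holderSemi f Ts γ₄ * t ^ γ₄) +
          holderSemi k Ts γ₃ * t ^ γ₃ * |f 0|) / γs := hG
    _ ≤ (2 * supNorm k Ts * (holderSemi f Ts γ₄ * t ^ min γ₃ γ₄) +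
          holderSemi k Ts γ₃ * t ^ min γ₃ γ₄ * |f 0|) / γs := by
        gcongr (2 * _ * (_ * ?_) + _ * ?_ * _) / _
        exacts [hpow (min_le_right γ₃ γ₄), hpow (min_le_left γ₃ γ₄)]
    _ ≤ 2 * t ^ min γ₃ γ₄ * (holderSemi f Ts γ₄ * supNorm k Ts +
          |f 0| * holderSemi k Ts γ₃) / γs := by
        gcongr
        nlinarith [mul_nonneg (mul_nonneg hHk htm) (abs_nonneg (f 0))]
    _ ≤ 2 * t ^ min γ₃ γ₄ * (holderSemi f Ts γ₄ * supNorm k Ts +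
          |f 0| * holderSemi k Ts γ₃) / (γs * GammaMin) := by
        gcongr
        · exact mul_pos hγs0 gammaMin_pos
        · exact mul_le_of_le_one_right hγs0.le gammaMin_le_one
    _ = _ := by ring
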